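/- arXiv:1705.04784 — 2 statements merged into one kernel-verified Lean document; each statement's English description precedes it below -/
import Mathlib

section
/- Let x = w·T·z be a scale mixture with w independent of z, E(w⁴) < ∞, z having i.i.d. coordinates with mean 0, variance 1, finite fourth moment, and T positive definite. Then for A = (T²)⁻¹, Var(x' A x) = p·E(w⁴)·Var(z₁²) + p²·Var(w²). In particular, if w² is non-degenerate, Var(x'Ax) is of order at least p². -/
open MeasureTheory ProbabilityTheory Matrix

/-!
Since `T` is symmetric, `x'(T²)⁻¹x = w² ‖z‖²`, and `w²` is independent of `S = ∑ zᵢ²`.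
For independent `X, Y` one has `Var(XY) = E[X²] Var Y + (E Y)² Var X`, and here
`E S = p`, `Var S = p Var(z₁²)`.
-/

namespace Matrix

variable {n R : Type*} [Fintype n] [DecidableEq n] [CommRing R]

lemma IsSymm.dotProduct_inv_mul_self_mulVec {T : Matrix n n R} (hT : T.IsSymm) (hTu : IsUnit T)
    (v : n → R) : (T *ᵥ v) ⬝ᵥ ((T * T)⁻¹ *ᵥ (T *ᵥ v)) = v ⬝ᵥ v := by
  have hdet : IsUnit T.det := (isUnit_iff_isUnit_det T).1 hTu
  have hTv : T *ᵥ v = v ᵥ* T := by rw [← mulVec_transpose, hT.eq]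
  rw [mulVec_mulVec, mul_inv_rev, Matrix.mul_assoc, nonsing_inv_mul T hdet, Matrix.mul_one,
    dotProduct_mulVec, hTv, vecMul_vecMul, mul_nonsing_inv T hdet, vecMul_one]

end Matrix

namespace MeasureTheory

variable {α : Type*} [MeasurableSpace α] {μ : Measure α}

lemma memLp_two_sq_of_integrable_pow_four {f : α → ℝ} (hf : Integrable (fun a => f a ^ 4) μ) :
    MemLp (fun a => f a ^ 2) 2 μ := by
  -- Only `f ^ 4` is known to be a.e. measurable, so `f ^ 2` is recovered as its square root.
  have hsqrt : (fun a => f a ^ 2) = fun a => Real.sqrt (f a ^ 4) := by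
    funext a
    rw [show f a ^ 4 = (f a ^ 2) ^ 2 by ring, Real.sqrt_sq (by positivity)]
  have hmeas : AEStronglyMeasurable (fun a => f a ^ 2) μ := by
    rw [hsqrt]
    exact Real.continuous_sqrt.comp_aestronglyMeasurable hf.aestronglyMeasurable
  rw [memLp_two_iff_integrable_sq hmeas]
  simpa only [← pow_mul] using hf

end MeasureTheory

namespace ProbabilityTheory

variable {Ω : Type*} [MeasurableSpace Ω] {μ : Measure Ω}

lemma IndepFun.variance_mul [IsProbabilityMeasure μ] {X Y : Ω → ℝ} (hXY : IndepFun X Y μ)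
    (hX : MemLp X 2 μ) (hY : MemLp Y 2 μ) :
    variance (X * Y) μ = μ[X ^ 2] * variance Y μ + μ[Y] ^ 2 * variance X μ := by
  have hsq : Measurable fun t : ℝ => t ^ 2 := measurable_id.pow_const 2
  have hXY2 : IndepFun (X ^ 2) (Y ^ 2) μ := hXY.comp hsq hsq
  have hmem : MemLp (X * Y) 2 μ := by
    rw [memLp_two_iff_integrable_sq (hX.1.mul hY.1)]
    convert hXY2.integrable_mul hX.integrable_sq hY.integrable_sq using 1
    ext ω
    simp only [Pi.mul_apply, Pi.pow_apply, mul_pow]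
  rw [variance_eq_sub hmem, variance_eq_sub hX, variance_eq_sub hY, mul_pow,
    hXY2.integral_mul_eq_mul_integral (hX.1.pow 2) (hY.1.pow 2),
    hXY.integral_mul_eq_mul_integral hX.1 hY.1]
  ring

lemma iIndepFun.variance_sum_of_identDistrib {ι : Type*} [Fintype ι] {X : ι → Ω → ℝ} {i₀ : ι}
    (hindep : iIndepFun X μ) (hident : ∀ i, IdentDistrib (X i) (X i₀) μ μ)
    (hX : MemLp (X i₀) 2 μ) :
    variance (∑ i, X i) μ = Fintype.card ι * variance (X i₀) μ := by
  rw [IndepFun.variance_sum (fun i _ => (hident i).memLp_iff.2 hX)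
    (fun i _ j _ hij => hindep.indepFun hij)]
  simp [fun i => (hident i).variance_eq]

end ProbabilityTheory

theorem scale_mixture_quadratic_form_variance_general
    {Ω : Type} [MeasurableSpace Ω] (μ : Measure Ω) [IsProbabilityMeasure μ]
    (p : ℕ) (hp : 0 < p) (T : Matrix (Fin p) (Fin p) ℝ) (hTpd : T.PosDef)
    (w : Ω → ℝ) (z : Ω → Fin p → ℝ)
    (hwz : IndepFun w z μ)
    (hzindep : iIndepFun (fun i ω => z ω i) μ)
    (hzid : ∀ i j : Fin p, IdentDistrib (fun ω => z ω i) (fun ω => z ω j) μ μ)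
    (hw4 : Integrable (fun ω => (w ω) ^ 4) μ)
    (hz4 : ∀ i, Integrable (fun ω => (z ω i) ^ 4) μ)
    (hzvar : ∀ i, ∫ ω, (z ω i) ^ 2 ∂μ = 1)
    (x : Ω → Fin p → ℝ) (hx : ∀ ω, x ω = w ω • T.mulVec (z ω)) :
    variance (fun ω => dotProduct (x ω) (((T * T)⁻¹).mulVec (x ω))) μ =
      p * (∫ ω, (w ω) ^ 4 ∂μ) * variance (fun ω => (z ω ⟨0, hp⟩) ^ 2) μ +
        (p : ℝ) ^ 2 * variance (fun ω => (w ω) ^ 2) μ := by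
  set X : Fin p → Ω → ℝ := fun i ω => z ω i ^ 2
  have hsq : Measurable fun t : ℝ => t ^ 2 := measurable_id.pow_const 2
  have hX : ∀ i, MemLp (X i) 2 μ := fun i => memLp_two_sq_of_integrable_pow_four (hz4 i)
  have hTsymm : T.IsSymm := isHermitian_iff_isSymm.1 hTpd.isHermitian
  have hform : (fun ω => x ω ⬝ᵥ ((T * T)⁻¹ *ᵥ x ω)) = (fun ω => w ω ^ 2) * ∑ i, X i := by
    funext ω
    rw [hx, mulVec_smul, dotProduct_smul, smul_dotProduct,
      hTsymm.dotProduct_inv_mul_self_mulVec hTpd.isUnit]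
    simp only [dotProduct, Pi.mul_apply, Finset.sum_apply, X, smul_eq_mul, sq]
    ring
  have hmean : μ[∑ i, X i] = (p : ℝ) := by
    rw [Finset.sum_fn, integral_finsetSum _ fun i _ => (hX i).integrable one_le_two]
    simp [X, hzvar]
  have hvar : variance (∑ i, X i) μ = p * variance (X ⟨0, hp⟩) μ := by
    have := (hzindep.comp (fun _ t => t ^ 2) fun _ => hsq).variance_sum_of_identDistrib
      (fun i => (hzid i ⟨0, hp⟩).comp hsq) (hX _)
    rwa [Fintype.card_fin] at this
  have hindep : IndepFun (fun ω => w ω ^ 2) (∑ i, X i) μ := by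
    have hS : ∑ i, X i = (fun v => ∑ i, v i ^ 2) ∘ z := by
      ext ω
      simp only [Finset.sum_apply, Function.comp_apply, X]
    rw [hS]
    exact hwz.comp hsq (Finset.measurable_sum _ fun i _ => (measurable_pi_apply i).pow_const 2)
  have hfourth : μ[(fun ω => w ω ^ 2) ^ 2] = ∫ ω, w ω ^ 4 ∂μ := by
    simp only [Pi.pow_apply, ← pow_mul]
  rw [hform, hindep.variance_mul (memLp_two_sq_of_integrable_pow_four hw4) (memLp_finsetSum' _
    fun i _ => hX i), hfourth, hvar, hmean]
  ring

/-- For the scale mixture x = w·T·z and A = (T²)⁻¹,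
Var(x'Ax) = p·E(w⁴)·Var(z₁²) + p²·Var(w²). -/
theorem scale_mixture_quadratic_form_variance
    {Ω : Type} [MeasurableSpace Ω] (μ : Measure Ω) [IsProbabilityMeasure μ]
    (p : ℕ) (hp : 0 < p) (T : Matrix (Fin p) (Fin p) ℝ) (hTpd : T.PosDef)
    (w : Ω → ℝ) (z : Ω → Fin p → ℝ)
    (hwz : IndepFun w z μ)
    (hzindep : iIndepFun (fun i ω => z ω i) μ)
    (hzid : ∀ i j : Fin p, IdentDistrib (fun ω => z ω i) (fun ω => z ω j) μ μ)
    (hw4 : Integrable (fun ω => (w ω) ^ 4) μ)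
    (hz4 : ∀ i, Integrable (fun ω => (z ω i) ^ 4) μ)
    (hzmean : ∀ i, ∫ ω, z ω i ∂μ = 0)
    (hzvar : ∀ i, ∫ ω, (z ω i) ^ 2 ∂μ = 1)
    (x : Ω → Fin p → ℝ) (hx : ∀ ω, x ω = w ω • T.mulVec (z ω)) :
    variance (fun ω => dotProduct (x ω) (((T * T)⁻¹).mulVec (x ω))) μ =
      p * (∫ ω, (w ω) ^ 4 ∂μ) * variance (fun ω => (z ω ⟨0, hp⟩) ^ 2) μ +
        (p : ℝ) ^ 2 * variance (fun ω => (w ω) ^ 2) μ :=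
  scale_mixture_quadratic_form_variance_general μ p hp T hTpd w z hwz hzindep hzid hw4 hz4 hzvar x
    hx
end

section
/- Let G = α·δ_{σ₁²} + (1−α)·δ_{σ₂²} with 0 < α < 1 and 0 < σ₁² < σ₂². Define f(x) = c − α·(cσ₁²x/(1+cσ₁²x))² − (1−α)·(cσ₂²x/(1+cσ₂²x))². Then the equation f'(x) = 0, equivalently α·σ₁⁴/(1+cσ₁²x)³ + (1−α)·σ₂⁴/(1+cσ₂²x)³ = 0, has exactly one real root x₀ in the domain where x ≠ −1/(cσ₁²) and x ≠ −1/(cσ₂²). -/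
/-!
Writing `a = A ^ n`, `b = B ^ n` with `A, B > 0`, the equation
`a / u ^ n + b / v ^ n = 0` says `(A / u) ^ n = (-(B / v)) ^ n`; since `n` is odd this forces
`A / u = -(B / v)`, which for `u = 1 + p x`, `v = 1 + q x` is the linear equation
`A + B + (A q + B p) x = 0`. Its root avoids both poles exactly because `p ≠ q`.
-/

theorem Odd.pow_add_pow_eq_zero_iff {R : Type*} [Ring R] [LinearOrder R] [IsStrictOrderedRing R]
    {n : ℕ} (hn : Odd n) {a b : R} : a ^ n + b ^ n = 0 ↔ a + b = 0 := by
  rw [add_eq_zero_iff_eq_neg, add_eq_zero_iff_eq_neg, ← hn.neg_pow, hn.pow_inj]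

theorem div_pow_add_div_pow_eq_zero_iff {K : Type*} [Field K] [LinearOrder K]
    [IsStrictOrderedRing K] {n : ℕ} (hn : Odd n) {A B u v : K} (hu : u ≠ 0) (hv : v ≠ 0) :
    A ^ n / u ^ n + B ^ n / v ^ n = 0 ↔ A * v + B * u = 0 := by
  rw [← div_pow, ← div_pow, hn.pow_add_pow_eq_zero_iff, div_add_div _ _ hu hv, div_eq_zero_iff,
    or_iff_left (mul_ne_zero hu hv), mul_comm u]

theorem ne_neg_one_div_iff_one_add_mul_ne_zero {K : Type*} [Field K] {p x : K} (hp : p ≠ 0) :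
    x ≠ -1 / p ↔ 1 + p * x ≠ 0 := by
  rw [Ne, Ne, eq_div_iff hp]
  exact not_congr ⟨fun h ↦ by linear_combination h, fun h ↦ by linear_combination h⟩

theorem existsUnique_div_pow_add_div_pow_eq_zero {n : ℕ} (hn : Odd n) {a b p q : ℝ}
    (ha : 0 < a) (hb : 0 < b) (hp : 0 ≤ p) (hq : 0 ≤ q) (hpq : p ≠ q) :
    ∃! x : ℝ, (1 + p * x ≠ 0 ∧ 1 + q * x ≠ 0) ∧ a / (1 + p * x) ^ n + b / (1 + q * x) ^ n = 0 := by
  have hn0 : n ≠ 0 := hn.pos.ne'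
  set A := a ^ (n⁻¹ : ℝ)
  set B := b ^ (n⁻¹ : ℝ)
  have hA : 0 < A := by positivity
  have hB : 0 < B := by positivity
  set D := A * q + B * p
  have hD : 0 < D := by
    rcases hpq.lt_or_gt with h | h
    · exact add_pos_of_pos_of_nonneg (mul_pos hA (hp.trans_lt h)) (by positivity)
    · exact add_pos_of_nonneg_of_pos (by positivity) (mul_pos hB (hq.trans_lt h))
  have hlinear : ∀ x, 1 + p * x ≠ 0 → 1 + q * x ≠ 0 →
      (a / (1 + p * x) ^ n + b / (1 + q * x) ^ n = 0 ↔ x = -(A + B) / D) := by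
    intro x hpx hqx
    rw [← Real.rpow_inv_natCast_pow ha.le hn0, ← Real.rpow_inv_natCast_pow hb.le hn0,
      div_pow_add_div_pow_eq_zero_iff hn hpx hqx, eq_div_iff hD.ne']
    constructor <;> intro h <;> linarith
  have hpx : 1 + p * (-(A + B) / D) ≠ 0 := by
    rw [show 1 + p * (-(A + B) / D) = A * (q - p) / D by field_simp; ring]
    exact div_ne_zero (mul_ne_zero hA.ne' (sub_ne_zero.2 hpq.symm)) hD.ne'
  have hqx : 1 + q * (-(A + B) / D) ≠ 0 := by
    rw [show 1 + q * (-(A + B) / D) = B * (p - q) / D by field_simp; ring]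
    exact div_ne_zero (mul_ne_zero hB.ne' (sub_ne_zero.2 hpq)) hD.ne'
  exact ⟨-(A + B) / D, ⟨⟨hpx, hqx⟩, (hlinear _ hpx hqx).2 rfl⟩,
    fun x ⟨⟨hpx, hqx⟩, h⟩ ↦ (hlinear x hpx hqx).1 h⟩

/-- For a two-component mixing distribution G = α·δ_{σ₁²} + (1−α)·δ_{σ₂²}, the
equation α·σ₁⁴/(1+cσ₁²x)³ + (1−α)·σ₂⁴/(1+cσ₂²x)³ = 0 has exactly one real root
away from the poles x = −1/(cσ₁²), x = −1/(cσ₂²). -/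
theorem two_component_unique_critical_point
    (c α s1 s2 : ℝ) (hc : 0 < c) (hα0 : 0 < α) (hα1 : α < 1)
    (hs1 : 0 < s1) (hs12 : s1 < s2) :
    ∃! x : ℝ, (x ≠ -1 / (c * s1) ∧ x ≠ -1 / (c * s2)) ∧
      α * s1 ^ 2 / (1 + c * s1 * x) ^ 3 +
        (1 - α) * s2 ^ 2 / (1 + c * s2 * x) ^ 3 = 0 := by
  have hs2 : 0 < s2 := hs1.trans hs12
  have h := existsUnique_div_pow_add_div_pow_eq_zero (n := 3) (by decide)
    (a := α * s1 ^ 2) (b := (1 - α) * s2 ^ 2) (by positivity)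
    (mul_pos (sub_pos.2 hα1) (by positivity)) (mul_pos hc hs1).le (mul_pos hc hs2).le
    (mul_lt_mul_of_pos_left hs12 hc).ne
  simpa only [ne_neg_one_div_iff_one_add_mul_ne_zero (mul_pos hc hs1).ne',
    ne_neg_one_div_iff_one_add_mul_ne_zero (mul_pos hc hs2).ne'] using h
end
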